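/- Define Φ : S^{n-1} × ℝ → ℝ^{n+2} by Φ(x,θ) = (cos θ, sin θ, x). Then: (i) Q(Φ(x,θ)) = 0 for every unit vector x and every θ; (ii) ⟨Φ(x,θ) | Φ(x',θ')⟩ = ⟨x,x'⟩ − cos(θ−θ') for all unit vectors x, x' and reals θ, θ'; (iii) if |θ−θ'| ≤ π, then ⟨Φ(x,θ) | Φ(x',θ')⟩ ≤ 0 if and only if |θ−θ'| ≤ arccos⟨x,x'⟩; (iv) if |θ−θ'| < π, then ⟨Φ(x,θ) | Φ(x',θ')⟩ < 0 if and only if |θ−θ'| < arccos⟨x,x'⟩. (This is the paper's criterion: a subset of the Einstein universe contained in a de Sitter domain is achronal, resp. strictly achronal, if and only if all pairwise scalar products of representative null vectors are nonpositive, resp. negative.) -/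

import Mathlib

open scoped RealInnerProductSpace

/-- The polar bilinear form of the quadratic form
`Q(u, v, x) = -u² - v² + ‖x‖²` of signature `(2, n)` on `ℝ × ℝ × ℝⁿ`. -/
noncomputable def polarForm (n : ℕ) (p q : ℝ × ℝ × EuclideanSpace ℝ (Fin n)) : ℝ :=
  -(p.1 * q.1) - p.2.1 * q.2.1 + ⟪p.2.2, q.2.2⟫

/-- The map `Φ(x, θ) = (cos θ, sin θ, x)` from `S^{n-1} × ℝ` to the null cone of
`Q` in `ℝ^{n+2}`. -/
noncomputable def PhiEin (n : ℕ) (x : EuclideanSpace ℝ (Fin n)) (θ : ℝ) :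
    ℝ × ℝ × EuclideanSpace ℝ (Fin n) :=
  (Real.cos θ, Real.sin θ, x)

open Real Set

namespace Real

theorem le_cos_iff_le_arccos {c t : ℝ} (hc : c ∈ Icc (-1) 1) (ht : t ∈ Icc 0 π) :
    c ≤ cos t ↔ t ≤ arccos c := by
  have h := strictAntiOn_cos.le_iff_ge ⟨arccos_nonneg c, arccos_le_pi c⟩ ht
  rwa [cos_arccos hc.1 hc.2] at h

theorem lt_cos_iff_lt_arccos {c t : ℝ} (hc : c ∈ Icc (-1) 1) (ht : t ∈ Icc 0 π) :
    c < cos t ↔ t < arccos c := by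
  have h := strictAntiOn_cos.lt_iff_gt ⟨arccos_nonneg c, arccos_le_pi c⟩ ht
  rwa [cos_arccos hc.1 hc.2] at h

end Real

theorem polarForm_PhiEin (n : ℕ) (x x' : EuclideanSpace ℝ (Fin n)) (θ θ' : ℝ) :
    polarForm n (PhiEin n x θ) (PhiEin n x' θ') = ⟪x, x'⟫ - cos (θ - θ') := by
  simp only [polarForm, PhiEin, cos_sub]
  ring

theorem polarForm_PhiEin_self {n : ℕ} {x : EuclideanSpace ℝ (Fin n)} (hx : ‖x‖ = 1) (θ : ℝ) :
    polarForm n (PhiEin n x θ) (PhiEin n x θ) = 0 := by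
  rw [polarForm_PhiEin, real_inner_self_eq_norm_sq, hx, sub_self, cos_zero]
  norm_num

theorem einstein_null_lift_criterion_general (n : ℕ)
    (x x' : EuclideanSpace ℝ (Fin n)) (hx : ‖x‖ = 1) (hx' : ‖x'‖ = 1) (θ θ' : ℝ) :
    polarForm n (PhiEin n x θ) (PhiEin n x θ) = 0 ∧
    polarForm n (PhiEin n x θ) (PhiEin n x' θ') = ⟪x, x'⟫ - Real.cos (θ - θ') ∧
    (|θ - θ'| ≤ Real.pi →
      (polarForm n (PhiEin n x θ) (PhiEin n x' θ') ≤ 0 ↔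
        |θ - θ'| ≤ Real.arccos ⟪x, x'⟫)) ∧
    (|θ - θ'| < Real.pi →
      (polarForm n (PhiEin n x θ) (PhiEin n x' θ') < 0 ↔
        |θ - θ'| < Real.arccos ⟪x, x'⟫)) := by
  have hinner := real_inner_mem_Icc_of_norm_eq_one hx hx'
  refine ⟨polarForm_PhiEin_self hx θ, polarForm_PhiEin n x x' θ θ', fun hle => ?_, fun hlt => ?_⟩
  · rw [polarForm_PhiEin, sub_nonpos, ← cos_abs]
    exact le_cos_iff_le_arccos hinner ⟨abs_nonneg _, hle⟩
  · rw [polarForm_PhiEin, sub_neg, ← cos_abs]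
    exact lt_cos_iff_lt_arccos hinner ⟨abs_nonneg _, hlt.le⟩

/-- `Φ(x,θ)` is a null vector, `⟪Φ(x,θ) | Φ(x',θ')⟫ = ⟪x,x'⟫ - cos (θ-θ')`,
and for `|θ-θ'| ≤ π` (resp. `< π`), the scalar product is nonpositive (resp. negative)
iff `|θ-θ'| ≤ arccos ⟪x,x'⟫` (resp. `<`): the causality criterion in a de Sitter
domain of the Einstein universe. -/
theorem einstein_null_lift_criterion (n : ℕ) (hn : 2 ≤ n)
    (x x' : EuclideanSpace ℝ (Fin n)) (hx : ‖x‖ = 1) (hx' : ‖x'‖ = 1) (θ θ' : ℝ) :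
    polarForm n (PhiEin n x θ) (PhiEin n x θ) = 0 ∧
    polarForm n (PhiEin n x θ) (PhiEin n x' θ') = ⟪x, x'⟫ - Real.cos (θ - θ') ∧
    (|θ - θ'| ≤ Real.pi →
      (polarForm n (PhiEin n x θ) (PhiEin n x' θ') ≤ 0 ↔
        |θ - θ'| ≤ Real.arccos ⟪x, x'⟫)) ∧
    (|θ - θ'| < Real.pi →
      (polarForm n (PhiEin n x θ) (PhiEin n x' θ') < 0 ↔
        |θ - θ'| < Real.arccos ⟪x, x'⟫)) :=
  einstein_null_lift_criterion_general n x x' hx hx' θ θ'
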